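/- arXiv:2007.01985 — 5 statements merged into one kernel-verified Lean document; each statement's English description precedes it below -/
import Mathlib

section
/- Let X be a proper geodesic space and H ≤ G ≤ Iso(X) closed subgroups. If diam(X/G) and the index [G:H] are both finite, then diam(X/H) ≤ 3·[G:H]·diam(X/G). -/
open Metric

def IsGeodesicSpace (Y : Type*) [MetricSpace Y] : Prop :=
  ∀ x y : Y, ∃ γ : ℝ → Y, γ 0 = x ∧ γ (dist x y) = y ∧
    ∀ s ∈ Set.Icc 0 (dist x y), ∀ t ∈ Set.Icc 0 (dist x y), dist (γ s) (γ t) = |s - t|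

noncomputable def isoTopology (Y : Type*) [MetricSpace Y] : TopologicalSpace (Y ≃ᵢ Y) :=
  TopologicalSpace.induced (fun g : Y ≃ᵢ Y => (g : Y → Y)) inferInstance

/-!
Split a geodesic from `x` to `y` into `n = [G:H]` equal pieces and move `x` next to each of the
`n + 1` division points by an element of `G`. Two of these elements lie in the same coset of `H`,
and the corresponding element of `H` brings `x` closer to `y` by at least `d(x, y)/n - 2D`, which
exceeds `D` as long as `d(x, y) > 3nD`; iterating gives the bound when `D > 0`. The general case
follows by letting `D' ↓ D`, since the orbits of a closed group of isometries of a proper space are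
closed: by Tychonoff, an ultrafilter of isometries that keeps one point bounded converges pointwise,
together with the inverses, and the limit is again an isometry.
-/

open Filter Topology

namespace IsometryEquiv

variable {X : Type*} [MetricSpace X]

theorem leftInverse_of_tendsto {l : Filter (X ≃ᵢ X)} [l.NeBot] {f g : X → X}
    (hf : Tendsto (fun e : X ≃ᵢ X => ⇑e) l (𝓝 f))
    (hg : Tendsto (fun e : X ≃ᵢ X => ⇑e.symm) l (𝓝 g)) : Function.LeftInverse g f := by
  intro a
  have hf' := tendsto_pi_nhds.mp hf
  refine tendsto_nhds_unique (tendsto_pi_nhds.mp hg (f a)) (tendsto_iff_dist_tendsto_zero.mpr ?_)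
  have : Tendsto (fun e : X ≃ᵢ X => dist (f a) (e a)) l (𝓝 0) := by
    simpa using (tendsto_const_nhds (x := f a)).dist (hf' a)
  refine this.congr fun e => ?_
  rw [← e.dist_eq (e.symm (f a)), apply_symm_apply]

theorem exists_coeFn_eq_of_tendsto {l : Filter (X ≃ᵢ X)} [l.NeBot] {f g : X → X}
    (hf : Tendsto (fun e : X ≃ᵢ X => ⇑e) l (𝓝 f))
    (hg : Tendsto (fun e : X ≃ᵢ X => ⇑e.symm) l (𝓝 g)) : ∃ e₀ : X ≃ᵢ X, ⇑e₀ = f := by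
  have hdist (a b : X) : dist (f a) (f b) = dist a b :=
    tendsto_nhds_unique ((tendsto_pi_nhds.mp hf a).dist (tendsto_pi_nhds.mp hf b))
      (by simp only [IsometryEquiv.dist_eq, tendsto_const_nhds])
  -- along the filter of inverses the roles of `f` and `g` are swapped
  have hright : Function.RightInverse g f :=
    leftInverse_of_tendsto (l := l.map IsometryEquiv.symm) (tendsto_map'_iff.mpr hg)
      (tendsto_map'_iff.mpr hf)
  exact ⟨⟨⟨f, g, leftInverse_of_tendsto hf hg, hright⟩, Isometry.of_dist_eq hdist⟩, rfl⟩

theorem exists_tendsto_coeFn_of_ultrafilter [ProperSpace X] (U : Ultrafilter (X ≃ᵢ X)) {x z : X}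
    {r : ℝ} (hU : ∀ᶠ e : X ≃ᵢ X in U, dist (e x) z ≤ r) :
    ∃ e₀ : X ≃ᵢ X, Tendsto (fun e : X ≃ᵢ X => ⇑e) U (𝓝 e₀) := by
  have hK₁ : IsCompact (Set.univ.pi fun w => closedBall z (dist w x + r)) :=
    isCompact_univ_pi fun _ => isCompact_closedBall _ _
  have hK₂ : IsCompact (Set.univ.pi fun w => closedBall x (dist w z + r)) :=
    isCompact_univ_pi fun _ => isCompact_closedBall _ _
  obtain ⟨f, -, hf⟩ := hK₁.ultrafilter_le_nhds' (U.map fun e : X ≃ᵢ X => ⇑e) <| by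
    refine U.mem_map.mpr (hU.mono fun (e : X ≃ᵢ X) he w _ => ?_)
    calc dist (e w) z ≤ dist (e w) (e x) + dist (e x) z := dist_triangle _ _ _
      _ ≤ dist w x + r := by rw [e.dist_eq]; gcongr
  obtain ⟨g, -, hg⟩ := hK₂.ultrafilter_le_nhds' (U.map fun e : X ≃ᵢ X => ⇑e.symm) <| by
    refine U.mem_map.mpr (hU.mono fun (e : X ≃ᵢ X) he w _ => ?_)
    calc dist (e.symm w) x = dist w (e x) := by rw [← e.dist_eq, apply_symm_apply]
      _ ≤ dist w z + dist z (e x) := dist_triangle _ _ _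
      _ ≤ dist w z + r := by rw [dist_comm z]; gcongr
  obtain ⟨e₀, rfl⟩ := exists_coeFn_eq_of_tendsto (l := (U : Filter (X ≃ᵢ X))) hf hg
  exact ⟨e₀, hf⟩

theorem isClosed_image_apply [ProperSpace X] {S : Set (X ≃ᵢ X)}
    (hS : @IsClosed _ (isoTopology X) S) (x : X) :
    IsClosed ((fun e : X ≃ᵢ X => e x) '' S) := by
  refine isClosed_of_closure_subset fun z hz => ?_
  have hcl : MapClusterPt z (𝓟 S) fun e : X ≃ᵢ X => e x := by
    rw [MapClusterPt, map_principal]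
    exact mem_closure_iff_clusterPt.mp hz
  obtain ⟨U, hUS, hUz⟩ := mapClusterPt_iff_ultrafilter.mp hcl
  obtain ⟨e₀, he₀⟩ :=
    exists_tendsto_coeFn_of_ultrafilter U (hUz.eventually (closedBall_mem_nhds z one_pos))
  refine ⟨e₀, ?_, tendsto_nhds_unique (tendsto_pi_nhds.mp he₀ x) hUz⟩
  have hU : Tendsto id (U : Filter (X ≃ᵢ X)) (@nhds _ (isoTopology X) e₀) := by
    rw [isoTopology, nhds_induced]
    exact tendsto_comap_iff.mpr he₀
  exact @IsClosed.mem_of_tendsto _ (isoTopology X) _ _ _ _ _ _ hS hU (le_principal_iff.mp hUS)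

end IsometryEquiv

theorem Subgroup.exists_lt_mul_inv_mem_of_relIndex_lt {α : Type*} [Group α] {H K : Subgroup α}
    (hH : H.relIndex K ≠ 0) {k : ℕ} (f : Fin k → α) (hf : ∀ i, f i ∈ K)
    (hk : H.relIndex K < k) : ∃ i j, i < j ∧ f j * (f i)⁻¹ ∈ H := by
  have : Finite (K ⧸ H.subgroupOf K) := Nat.finite_of_card_ne_zero hH
  let q : Fin k → K ⧸ H.subgroupOf K := fun i => ((⟨f i, hf i⟩ : K)⁻¹ : K)
  have hq {i j} (hij : q i = q j) : f i * (f j)⁻¹ ∈ H := by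
    simpa [q, QuotientGroup.eq, Subgroup.mem_subgroupOf] using hij
  obtain ⟨i, j, hij, hne⟩ : ∃ i j, q i = q j ∧ i ≠ j := by
    refine Function.not_injective_iff.mp fun hinj => hk.not_ge ?_
    exact (Nat.card_fin k).symm.trans_le (Nat.card_le_card_of_injective q hinj)
  rcases hne.lt_or_gt with hlt | hlt
  · exact ⟨i, j, hlt, by simpa using H.inv_mem (hq hij)⟩
  · exact ⟨j, i, hlt, hq hij⟩

section

variable {X : Type*} [MetricSpace X]

theorem IsGeodesicSpace.exists_dist_eq (hgeo : IsGeodesicSpace X) (x y : X) {t : ℝ}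
    (ht₀ : 0 ≤ t) (ht : t ≤ dist x y) : ∃ p, dist x p = t ∧ dist p y = dist x y - t := by
  obtain ⟨γ, hγ₀, hγ₁, hγ⟩ := hgeo x y
  have h₀ : (0 : ℝ) ∈ Set.Icc 0 (dist x y) := ⟨le_rfl, ht₀.trans ht⟩
  have h₁ : dist x y ∈ Set.Icc 0 (dist x y) := ⟨ht₀.trans ht, le_rfl⟩
  refine ⟨γ t, ?_, ?_⟩
  · rw [← hγ₀, hγ 0 h₀ t ⟨ht₀, ht⟩, zero_sub, abs_neg, abs_of_nonneg ht₀]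
  · rw [← hγ₁, hγ t ⟨ht₀, ht⟩ _ h₁, hγ₁, abs_sub_comm, abs_of_nonneg (sub_nonneg.mpr ht)]

theorem exists_mem_dist_apply_le_of_forall_lt_dist {H : Subgroup (X ≃ᵢ X)} {y : X} {B δ : ℝ}
    (hδ : 0 < δ) (hstep : ∀ x, B < dist x y → ∃ h ∈ H, dist (h x) y ≤ dist x y - δ) (x : X) :
    ∃ h ∈ H, dist (h x) y ≤ B := by
  suffices ∀ m : ℕ, ∀ x, dist x y ≤ B + m * δ → ∃ h ∈ H, dist (h x) y ≤ B by
    obtain ⟨m, hm⟩ := exists_nat_ge ((dist x y - B) / δ)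
    exact this m x (by linarith [(div_le_iff₀ hδ).mp hm])
  intro m
  induction m with
  | zero => exact fun x hx => ⟨1, H.one_mem, by simpa using hx⟩
  | succ m ih =>
    intro x hx
    by_cases hxB : dist x y ≤ B
    · exact ⟨1, H.one_mem, hxB⟩
    obtain ⟨h₁, hh₁, hd₁⟩ := hstep x (not_le.mp hxB)
    obtain ⟨h₂, hh₂, hd₂⟩ := ih (h₁ x) (by push_cast at hx; linarith)
    exact ⟨h₂ * h₁, H.mul_mem hh₂ hh₁, hd₂⟩

variable {G H : Subgroup (X ≃ᵢ X)} {D : ℝ}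

theorem exists_mem_dist_apply_le_sub (hgeo : IsGeodesicSpace X) (hindex : H.relIndex G ≠ 0)
    (hdiam : ∀ x y : X, ∃ g ∈ G, dist (g x) y ≤ D) (x y : X) :
    ∃ h ∈ H, dist (h x) y ≤ dist x y - dist x y / H.relIndex G + 2 * D := by
  set n := H.relIndex G
  set L := dist x y
  have hn : (0 : ℝ) < n := Nat.cast_pos.mpr (Nat.pos_of_ne_zero hindex)
  have ht (k : Fin (n + 1)) : 0 ≤ k * L / n ∧ k * L / n ≤ L := by
    refine ⟨by positivity, (div_le_iff₀ hn).mpr ?_⟩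
    rw [mul_comm L]
    exact mul_le_mul_of_nonneg_right (by exact_mod_cast k.is_le) dist_nonneg
  choose p hxp hpy using fun k => hgeo.exists_dist_eq x y (ht k).1 (ht k).2
  choose g hgG hg using fun k => hdiam x (p k)
  obtain ⟨i, j, hij, hH⟩ :=
    Subgroup.exists_lt_mul_inv_mem_of_relIndex_lt hindex g hgG n.lt_succ_self
  -- `h` carries `g i x` to `g j x`, hence `p i` to within `2D` of `p j`
  set h := g j * (g i)⁻¹
  refine ⟨h, hH, ?_⟩
  have hmid : dist (h (p i)) (p j) ≤ 2 * D :=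
    calc dist (h (p i)) (p j) ≤ dist (h (p i)) (h (g i x)) + dist (g j x) (p j) := by
          simpa [h, IsometryEquiv.mul_apply] using dist_triangle (h (p i)) (g j x) (p j)
      _ ≤ 2 * D := by rw [h.dist_eq, dist_comm]; linarith [hg i, hg j]
  have hgap : L / n ≤ j * L / n - i * L / n := by
    have : (i : ℝ) + 1 ≤ j := by exact_mod_cast hij
    rw [← sub_div, ← sub_mul]
    gcongr
    exact le_mul_of_one_le_left dist_nonneg (by linarith)
  calc dist (h x) y ≤ dist (h x) (h (p i)) + dist (h (p i)) (p j) + dist (p j) y :=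
        dist_triangle4 _ _ _ _
    _ ≤ i * L / n + 2 * D + (L - j * L / n) := by rw [h.dist_eq, hxp, hpy]; gcongr
    _ ≤ L - L / n + 2 * D := by linarith

theorem exists_mem_dist_apply_le_of_pos (hgeo : IsGeodesicSpace X) (hindex : H.relIndex G ≠ 0)
    (hD : 0 < D) (hdiam : ∀ x y : X, ∃ g ∈ G, dist (g x) y ≤ D) (x y : X) :
    ∃ h ∈ H, dist (h x) y ≤ 3 * H.relIndex G * D := by
  have hn : (0 : ℝ) < H.relIndex G := Nat.cast_pos.mpr (Nat.pos_of_ne_zero hindex)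
  refine exists_mem_dist_apply_le_of_forall_lt_dist hD (fun x hx => ?_) x
  obtain ⟨h, hh, hd⟩ := exists_mem_dist_apply_le_sub hgeo hindex hdiam x y
  have : 3 * D ≤ dist x y / H.relIndex G := by
    rw [le_div_iff₀ hn]; linarith
  exact ⟨h, hh, by linarith⟩

end

theorem diameter_subgroup_general
    (X : Type*) [MetricSpace X] [ProperSpace X] (hgeo : IsGeodesicSpace X)
    (G H : Subgroup (X ≃ᵢ X))
    (hHclosed : @IsClosed _ (isoTopology X) (H : Set (X ≃ᵢ X)))
    (D : ℝ)
    (hdiam : ∀ x y : X, ∃ g ∈ G, dist (g x) y ≤ D)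
    (hindex : H.relIndex G ≠ 0) :
    ∀ x y : X, ∃ h ∈ H, dist (h x) y ≤ 3 * (H.relIndex G : ℝ) * D := by
  intro x y
  set S := (fun e : X ≃ᵢ X => e x) '' H
  have hD : 0 ≤ D := (hdiam x x).elim fun _ hg => dist_nonneg.trans hg.2
  have hnear : ∀ D' ∈ Set.Ioi D, infDist y S ≤ 3 * H.relIndex G * D' := fun D' hD' => by
    obtain ⟨h, hh, hd⟩ := exists_mem_dist_apply_le_of_pos hgeo hindex (hD.trans_lt hD')
      (fun a b => (hdiam a b).imp fun _ hg => ⟨hg.1, hg.2.trans hD'.le⟩) x y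
    exact (infDist_le_dist_of_mem (Set.mem_image_of_mem _ hh)).trans (by rwa [dist_comm])
  have hinf : infDist y S ≤ 3 * H.relIndex G * D :=
    ge_of_tendsto (((continuous_const.mul continuous_id).tendsto D).mono_left nhdsWithin_le_nhds)
      (eventually_nhdsWithin_of_forall hnear)
  obtain ⟨_, ⟨h, hh, rfl⟩, hz⟩ :=
    (IsometryEquiv.isClosed_image_apply hHclosed x).exists_infDist_eq_dist
      ⟨x, 1, H.one_mem, rfl⟩ y
  exact ⟨h, hh, by rw [dist_comm, ← hz]; exact hinf⟩

/-- If `diam(X/G) ≤ D` and `[G:H] < ∞`, then `diam(X/H) ≤ 3 [G:H] diam(X/G)`. -/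
theorem diameter_subgroup
    (X : Type*) [MetricSpace X] [ProperSpace X] (hgeo : IsGeodesicSpace X)
    (G H : Subgroup (X ≃ᵢ X)) (hHG : H ≤ G)
    (hGclosed : @IsClosed _ (isoTopology X) (G : Set (X ≃ᵢ X)))
    (hHclosed : @IsClosed _ (isoTopology X) (H : Set (X ≃ᵢ X)))
    (D : ℝ) (hD : 0 ≤ D)
    (hdiam : ∀ x y : X, ∃ g ∈ G, dist (g x) y ≤ D)
    (hindex : H.relIndex G ≠ 0) :
    ∀ x y : X, ∃ h ∈ H, dist (h x) y ≤ 3 * (H.relIndex G : ℝ) * D :=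
  diameter_subgroup_general X hgeo G H hHclosed D hdiam hindex
end

section
/- Let G be a connected nilpotent Lie group and K ≤ G a compact subgroup. Then K is contained in the center of G. -/
/-!
A Lie group has no small subgroups: in a chart at the identity, squaring has derivative `2`, so
the iterated squares of any element other than `1` leave a fixed neighbourhood of `1`.

Let `K` be compact and suppose that all nested commutators `nestedCommutator l x` with `x ∈ K`
and `n + 1` entries in `l` are central; by nilpotency this holds for large `n`. For a fixed list
`l` of `n` entries, `x ↦ ⁅nestedCommutator l x, g⁆` is then a homomorphism on `K`. By
compactness its image lies in a small neighbourhood of `1` for `g` near `1`, so it is trivial.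
Hence the centraliser of the nested commutators with `n` entries is open, hence everything by
connectedness, and descending induction on `n` ends with `K` central.
-/

open Filter Topology Metric Manifold
open scoped commutatorElement

section Expansion

variable {𝕜 E : Type*} [NontriviallyNormedField 𝕜] [NormedAddCommGroup E] [NormedSpace 𝕜 E]

theorem HasFDerivAt.eventually_mul_norm_sub_le {s : E → E} {c : E} {a : 𝕜}
    (hs : HasFDerivAt s (a • ContinuousLinearMap.id 𝕜 E) c) (hc : s c = c) {r : ℝ}
    (hr : r < ‖a‖) : ∀ᶠ u in 𝓝 c, r * ‖u - c‖ ≤ ‖s u - c‖ := by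
  filter_upwards [hs.isLittleO.def (sub_pos.mpr hr)] with u hu
  rw [hc, smul_apply, ContinuousLinearMap.id_apply, norm_sub_rev] at hu
  have := norm_sub_norm_le (a • (u - c)) (s u - c)
  rw [norm_smul] at this
  nlinarith

theorem HasFDerivAt.exists_forall_iterate_mem_ball_imp_eq {s : E → E} {c : E} {a : 𝕜}
    (hs : HasFDerivAt s (a • ContinuousLinearMap.id 𝕜 E) c) (hc : s c = c) (ha : 1 < ‖a‖) :
    ∃ δ > 0, ∀ u, (∀ k, s^[k] u ∈ ball c δ) → u = c := by
  obtain ⟨r, hr1, hra⟩ := exists_between ha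
  obtain ⟨δ, hδ, hexp⟩ := Metric.eventually_nhds_iff.mp (hs.eventually_mul_norm_sub_le hc hra)
  refine ⟨δ, hδ, fun u hu => ?_⟩
  have hgrow : ∀ k, r ^ k * ‖u - c‖ ≤ ‖s^[k] u - c‖ := by
    intro k
    induction k with
    | zero => simp
    | succ k ih =>
      calc r ^ (k + 1) * ‖u - c‖ = r * (r ^ k * ‖u - c‖) := by ring
        _ ≤ r * ‖s^[k] u - c‖ := by gcongr
        _ ≤ ‖s^[k + 1] u - c‖ := by rw [Function.iterate_succ_apply']; exact hexp (hu k)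
  by_contra hne
  have hpos : 0 < ‖u - c‖ := norm_pos_iff.mpr (sub_ne_zero.mpr hne)
  obtain ⟨k, hk⟩ := pow_unbounded_of_one_lt (δ / ‖u - c‖) hr1
  have hfar : δ < ‖s^[k] u - c‖ := ((div_lt_iff₀ hpos).mp hk).trans_le (hgrow k)
  have hnear := hu k
  rw [mem_ball, dist_eq_norm] at hnear
  linarith

theorem HasFDerivAt.comp_diag_of_eventually_identity {m : E × E → E} {L : E × E →L[𝕜] E}
    {c : E} (hm : HasFDerivAt m L (c, c)) (hl : ∀ᶠ u in 𝓝 c, m (u, c) = u)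
    (hr : ∀ᶠ u in 𝓝 c, m (c, u) = u) :
    HasFDerivAt (fun u => m (u, u)) ((2 : 𝕜) • ContinuousLinearMap.id 𝕜 E) c := by
  have hid : HasFDerivAt (fun u : E => u) (ContinuousLinearMap.id 𝕜 E) c := hasFDerivAt_id c
  have hinl : L.comp (ContinuousLinearMap.inl 𝕜 E E) = ContinuousLinearMap.id 𝕜 E :=
    (hm.comp (f := fun u => (u, c)) c (hasFDerivAt_prodMk_left c c)).unique
      (hid.congr_of_eventuallyEq (hl.mono fun _ h => h))
  have hinr : L.comp (ContinuousLinearMap.inr 𝕜 E E) = ContinuousLinearMap.id 𝕜 E :=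
    (hm.comp (f := fun u => (c, u)) c (hasFDerivAt_prodMk_right c c)).unique
      (hid.congr_of_eventuallyEq (hr.mono fun _ h => h))
  have hdiag : L.comp ((ContinuousLinearMap.id 𝕜 E).prod (ContinuousLinearMap.id 𝕜 E)) =
      (2 : 𝕜) • ContinuousLinearMap.id 𝕜 E := by
    ext w
    have h1 : L (w, 0) = w := congr($hinl w)
    have h2 : L (0, w) = w := congr($hinr w)
    show L (w, w) = (2 : 𝕜) • w
    calc L (w, w) = L ((w, 0) + (0, w)) := by simp
      _ = (2 : 𝕜) • w := by rw [map_add, h1, h2, two_smul]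
  exact hdiag ▸ hm.comp (f := fun u => (u, u)) c (hid.prodMk hid)

end Expansion

def NoSmallSubgroups (G : Type*) [Group G] [TopologicalSpace G] : Prop :=
  ∃ U ∈ 𝓝 (1 : G), ∀ H : Subgroup G, (H : Set G) ⊆ U → H = ⊥

section LieGroup

variable {E : Type*} [NormedAddCommGroup E] [NormedSpace ℝ E] {G : Type*} [TopologicalSpace G]
  [ChartedSpace E G]

theorem differentiableAt_mul_extChartAt [Mul G] {n : WithTop ℕ∞} [ContMDiffMul 𝓘(ℝ, E) n G]
    (hn : n ≠ 0) (a b : G) :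
    DifferentiableAt ℝ (fun q : E × E => extChartAt 𝓘(ℝ, E) (a * b)
      ((extChartAt 𝓘(ℝ, E) a).symm q.1 * (extChartAt 𝓘(ℝ, E) b).symm q.2))
      (extChartAt 𝓘(ℝ, E) a a, extChartAt 𝓘(ℝ, E) b b) := by
  have h := (contMDiff_mul 𝓘(ℝ, E) n).mdifferentiable hn (a, b)
  rw [mdifferentiableAt_iff, ModelWithCorners.range_eq_univ, differentiableWithinAt_univ] at h
  exact h.2

theorem noSmallSubgroups_of_contMDiffMul [Group G] {n : WithTop ℕ∞}
    [ContMDiffMul 𝓘(ℝ, E) n G] (hn : n ≠ 0) : NoSmallSubgroups G := by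
  set e := extChartAt 𝓘(ℝ, E) (1 : G)
  set m : E × E → E := fun q => e (e.symm q.1 * e.symm q.2)
  have he : e.symm (e 1) = 1 := extChartAt_to_inv 1
  have hl : ∀ᶠ u in 𝓝 (e 1), m (u, e 1) = u := by
    filter_upwards [extChartAt_target_mem_nhds (1 : G)] with u hu
    simp only [m, he, mul_one]
    exact e.right_inv hu
  have hr : ∀ᶠ u in 𝓝 (e 1), m (e 1, u) = u := by
    filter_upwards [extChartAt_target_mem_nhds (1 : G)] with u hu
    simp only [m, he, one_mul]
    exact e.right_inv hu
  have hm : DifferentiableAt ℝ m (e 1, e 1) := by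
    simpa only [mul_one] using differentiableAt_mul_extChartAt hn (1 : G) 1
  have hsq := hm.hasFDerivAt.comp_diag_of_eventually_identity hl hr
  obtain ⟨δ, hδ, hfix⟩ :=
    hsq.exists_forall_iterate_mem_ball_imp_eq (by simp only [m, he, mul_one]) (by norm_num)
  refine ⟨e.source ∩ e ⁻¹' ball (e 1) δ, inter_mem (extChartAt_source_mem_nhds 1)
    ((continuousAt_extChartAt 1).preimage_mem_nhds (ball_mem_nhds _ hδ)), fun H hH => ?_⟩
  refine (Subgroup.eq_bot_iff_forall H).mpr fun h hh => ?_
  have hiter : ∀ k, (fun u => m (u, u))^[k] (e h) = e (h ^ 2 ^ k) := by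
    intro k
    induction k with
    | zero => simp
    | succ k ih =>
      rw [Function.iterate_succ_apply', ih]
      simp only [m, e.left_inv (hH (pow_mem hh _)).1, ← pow_add, ← two_mul, ← pow_succ']
  have hfixed : e h = e 1 := hfix _ fun k => hiter k ▸ (hH (pow_mem hh _)).2
  rw [← e.left_inv (hH hh).1, hfixed, he]

end LieGroup

section NestedCommutator

variable {G : Type*} [Group G]

theorem commutatorElement_eq_one_of_mem_center {z : G} (hz : z ∈ Subgroup.center G)
    (g : G) : ⁅z, g⁆ = 1 :=
  commutatorElement_eq_one_iff_mul_comm.mpr (Subgroup.mem_center_iff.mp hz g).symm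

theorem commutatorElement_mul_left_of_mem_center {a b g : G}
    (h : ⁅b, g⁆ ∈ Subgroup.center G) : ⁅a * b, g⁆ = ⁅a, g⁆ * ⁅b, g⁆ := by
  rw [Subgroup.mem_center_iff] at h
  rw [commutatorElement_mul_left_eq_conj_mul, h a, mul_inv_cancel_right, h]

theorem exists_commutatorElement_mul_mul_eq {N : Subgroup G} [N.Normal] {a b v g : G}
    (hb : ⁅b, g⁆ ∈ N.upperCentralSeriesStep) (hv : v ∈ N.upperCentralSeriesStep) :
    ∃ w ∈ N, ⁅a * b * v, g⁆ = ⁅a, g⁆ * ⁅b, g⁆ * w := by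
  set π := QuotientGroup.mk' N
  rw [Subgroup.upperCentralSeriesStep_eq_comap_center, Subgroup.mem_comap] at hb hv
  rw [map_commutatorElement] at hb
  have hv1 : ⁅π v, π g⁆ = 1 := commutatorElement_eq_one_of_mem_center hv _
  have key : π (⁅a, g⁆ * ⁅b, g⁆) = π ⁅a * b * v, g⁆ := by
    simp only [map_mul, map_commutatorElement]
    rw [commutatorElement_mul_left_of_mem_center (hv1 ▸ one_mem _), hv1, mul_one,
      commutatorElement_mul_left_of_mem_center hb]
  exact ⟨_, QuotientGroup.eq.mp key, (mul_inv_cancel_left _ _).symm⟩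

/-- `nestedCommutator [g₁, …, gₙ] x = ⁅⁅⁅x, gₙ⁆, …⁆, g₁⁆`. -/
def nestedCommutator (l : List G) (x : G) : G :=
  l.foldr (fun g w => ⁅w, g⁆) x

@[simp]
theorem nestedCommutator_nil (x : G) : nestedCommutator [] x = x := rfl

@[simp]
theorem nestedCommutator_cons (g : G) (l : List G) (x : G) :
    nestedCommutator (g :: l) x = ⁅nestedCommutator l x, g⁆ := rfl

theorem nestedCommutator_mem_lowerCentralSeries (l : List G) (x : G) :
    nestedCommutator l x ∈ (⊤ : Subgroup G).lowerCentralSeries l.length := by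
  induction l with
  | nil => exact Subgroup.mem_top x
  | cons g l ih =>
    rw [List.length_cons, Subgroup.lowerCentralSeries_succ]
    exact Subgroup.commutator_mem_commutator ih (Subgroup.mem_top g)

theorem continuous_nestedCommutator [TopologicalSpace G] [IsTopologicalGroup G] (l : List G) :
    Continuous (nestedCommutator l) := by
  induction l with
  | nil => exact continuous_id
  | cons g l ih =>
    show Continuous fun x => ⁅nestedCommutator l x, g⁆
    simp only [commutatorElement_def]
    fun_prop

def nestedCommutatorClosure (K : Subgroup G) (n : ℕ) : Subgroup G :=
  Subgroup.normalClosure {z | ∃ l : List G, l.length = n ∧ ∃ x ∈ K, nestedCommutator l x = z}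

instance (K : Subgroup G) (n : ℕ) : (nestedCommutatorClosure K n).Normal :=
  Subgroup.normalClosure_normal

theorem nestedCommutator_mem_closure {K : Subgroup G} (l : List G) {x : G} (hx : x ∈ K) :
    nestedCommutator l x ∈ nestedCommutatorClosure K l.length :=
  Subgroup.subset_normalClosure ⟨l, rfl, x, hx, rfl⟩

theorem le_nestedCommutatorClosure_zero (K : Subgroup G) : K ≤ nestedCommutatorClosure K 0 :=
  fun _ hx => nestedCommutator_mem_closure [] hx

theorem nestedCommutatorClosure_le_lowerCentralSeries (K : Subgroup G) (n : ℕ) :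
    nestedCommutatorClosure K n ≤ (⊤ : Subgroup G).lowerCentralSeries n := by
  refine Subgroup.normalClosure_le_normal ?_
  rintro _ ⟨l, rfl, x, -, rfl⟩
  exact nestedCommutator_mem_lowerCentralSeries l x

theorem nestedCommutatorClosure_le_upperCentralSeriesStep (K : Subgroup G) (n : ℕ) :
    nestedCommutatorClosure K n ≤
      (nestedCommutatorClosure K (n + 1)).upperCentralSeriesStep := by
  have : (nestedCommutatorClosure K (n + 1)).upperCentralSeriesStep.Normal := by
    rw [Subgroup.upperCentralSeriesStep_eq_comap_center]; infer_instance
  refine Subgroup.normalClosure_le_normal ?_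
  rintro _ ⟨l, rfl, x, hx, rfl⟩ g
  exact nestedCommutator_mem_closure (g :: l) hx

theorem nestedCommutator_mul {K : Subgroup G} (x : G) {y : G} (hy : y ∈ K)
    (l : List G) : ∃ v ∈ nestedCommutatorClosure K (l.length + 1),
      nestedCommutator l (x * y) = nestedCommutator l x * nestedCommutator l y * v := by
  induction l with
  | nil => exact ⟨1, one_mem _, by simp⟩
  | cons g l ih =>
    obtain ⟨v, hv, hxy⟩ := ih
    rw [nestedCommutator_cons, hxy]
    have hstep := nestedCommutatorClosure_le_upperCentralSeriesStep K (l.length + 1)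
    exact exists_commutatorElement_mul_mul_eq (hstep (nestedCommutator_mem_closure (g :: l) hy))
      (hstep hv)

end NestedCommutator

section Topological

variable {G : Type*} [Group G] [TopologicalSpace G]

theorem Subgroup.eq_top_of_mem_nhds_one [SeparatelyContinuousMul G] [ConnectedSpace G]
    {H : Subgroup G} (hH : (H : Set G) ∈ 𝓝 1) : H = ⊤ := by
  have hopen := H.isOpen_of_mem_nhds hH
  exact Subgroup.coe_eq_univ.mp
    (IsClopen.eq_univ ⟨H.isClosed_of_isOpen hopen, hopen⟩ ⟨1, H.one_mem⟩)

namespace NoSmallSubgroups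

theorem eventually_forall_eq_one (hG : NoSmallSubgroups G) {K : Subgroup G}
    (hK : IsCompact (K : Set G)) {f : G → G → G} (hf : Continuous (Function.uncurry f))
    (hf1 : ∀ x ∈ K, f 1 x = 1) (hmul : ∀ g, ∀ x ∈ K, ∀ y ∈ K, f g (x * y) = f g x * f g y) :
    ∀ᶠ g in 𝓝 1, ∀ x ∈ K, f g x = 1 := by
  obtain ⟨U, hU, hsmall⟩ := hG
  have hnear : ∀ᶠ g in 𝓝 1, ∀ x ∈ K, f g x ∈ U :=
    hK.eventually_forall_of_forall_eventually fun x hx =>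
      hf.continuousAt.preimage_mem_nhds (by simpa [hf1 x hx] using hU)
  filter_upwards [hnear] with g hg x hx
  let ψ : K →* G := MonoidHom.mk' (fun y => f g y) fun y z => hmul g y y.2 z z.2
  have hψ : ψ = 1 := MonoidHom.range_eq_bot_iff.mp <| hsmall _ <| by
    rintro _ ⟨y, rfl⟩
    exact hg y y.2
  exact congr($hψ ⟨x, hx⟩)

theorem image_subset_center [IsTopologicalGroup G] [ConnectedSpace G]
    (hG : NoSmallSubgroups G) {K : Subgroup G} (hK : IsCompact (K : Set G)) {φ : G → G}
    (hφ : Continuous φ)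
    (hmul : ∀ x ∈ K, ∀ y ∈ K, ∃ z ∈ Subgroup.center G, φ (x * y) = φ x * φ y * z)
    (hcomm : ∀ x ∈ K, ∀ g : G, ⁅φ x, g⁆ ∈ Subgroup.center G) :
    φ '' K ⊆ Subgroup.center G := by
  have hhom : ∀ g : G, ∀ x ∈ K, ∀ y ∈ K, ⁅φ (x * y), g⁆ = ⁅φ x, g⁆ * ⁅φ y, g⁆ := by
    intro g x hx y hy
    obtain ⟨z, hz, hxy⟩ := hmul x hx y hy
    have hz1 := commutatorElement_eq_one_of_mem_center hz g
    rw [hxy, commutatorElement_mul_left_of_mem_center (hz1 ▸ one_mem _), hz1, mul_one,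
      commutatorElement_mul_left_of_mem_center (hcomm y hy g)]
  have hnear : ∀ᶠ g in 𝓝 (1 : G), ∀ x ∈ K, ⁅φ x, g⁆ = 1 :=
    hG.eventually_forall_eq_one hK (f := fun g x => ⁅φ x, g⁆)
      (by simp only [Function.uncurry_def, commutatorElement_def]; fun_prop)
      (fun x _ => commutatorElement_one_right _) hhom
  refine Subgroup.centralizer_eq_top_iff_subset.mp <| Subgroup.eq_top_of_mem_nhds_one <|
    mem_of_superset hnear fun g hg => Subgroup.mem_centralizer_iff.mpr ?_
  rintro _ ⟨x, hx, rfl⟩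
  exact commutatorElement_eq_one_iff_mul_comm.mp (hg x hx)

theorem nestedCommutatorClosure_le_center_of_succ [IsTopologicalGroup G] [ConnectedSpace G]
    (hG : NoSmallSubgroups G) {K : Subgroup G} (hK : IsCompact (K : Set G)) {n : ℕ}
    (h : nestedCommutatorClosure K (n + 1) ≤ Subgroup.center G) :
    nestedCommutatorClosure K n ≤ Subgroup.center G := by
  refine Subgroup.normalClosure_le_normal ?_
  rintro _ ⟨l, rfl, x, hx, rfl⟩
  refine hG.image_subset_center hK (continuous_nestedCommutator l) (fun x _ y hy => ?_)
    (fun x hx g => h (nestedCommutator_mem_closure (g :: l) hx)) ⟨x, hx, rfl⟩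
  obtain ⟨v, hv, hxy⟩ := nestedCommutator_mul x hy l
  exact ⟨v, h hv, hxy⟩

theorem le_center_of_isNilpotent [IsTopologicalGroup G] [ConnectedSpace G]
    (hG : NoSmallSubgroups G) {K : Subgroup G} (hK : IsCompact (K : Set G))
    (hnil : Group.IsNilpotent G) : K ≤ Subgroup.center G := by
  obtain ⟨c, hc⟩ := Subgroup.nilpotent_iff_lowerCentralSeries.mp hnil
  have hdeep : nestedCommutatorClosure K c ≤ Subgroup.center G :=
    (nestedCommutatorClosure_le_lowerCentralSeries K c).trans (hc ▸ bot_le)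
  exact (le_nestedCommutatorClosure_zero K).trans <| Nat.decreasingInduction
    (motive := fun n _ => nestedCommutatorClosure K n ≤ Subgroup.center G)
    (fun _ _ => hG.nestedCommutatorClosure_le_center_of_succ hK) hdeep (Nat.zero_le c)

end NoSmallSubgroups

end Topological

theorem compact_subgroup_of_connected_nilpotent_lie_group_central_general
    {E : Type*} [NormedAddCommGroup E] [NormedSpace ℝ E]
    (G : Type*) [TopologicalSpace G] [ChartedSpace E G] [Group G]
    [LieGroup 𝓘(ℝ, E) (⊤ : ℕ∞) G] [ConnectedSpace G]
    (hnil : Group.IsNilpotent G)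
    (K : Subgroup G) (hK : IsCompact (K : Set G)) :
    K ≤ Subgroup.center G := by
  have : IsTopologicalGroup G := topologicalGroup_of_lieGroup 𝓘(ℝ, E) (⊤ : ℕ∞)
  have hG : NoSmallSubgroups G :=
    noSmallSubgroups_of_contMDiffMul (E := E) (n := (⊤ : ℕ∞)) (by simp)
  exact hG.le_center_of_isNilpotent hK hnil

/-- A compact subgroup of a connected nilpotent Lie group is central. -/
theorem compact_subgroup_of_connected_nilpotent_lie_group_central
    {E : Type*} [NormedAddCommGroup E] [NormedSpace ℝ E] [FiniteDimensional ℝ E]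
    (G : Type*) [TopologicalSpace G] [ChartedSpace E G] [Group G]
    [LieGroup 𝓘(ℝ, E) (⊤ : ℕ∞) G] [ConnectedSpace G]
    (hnil : Group.IsNilpotent G)
    (K : Subgroup G) (hK : IsCompact (K : Set G)) :
    K ≤ Subgroup.center G :=
  compact_subgroup_of_connected_nilpotent_lie_group_central_general (E := E) G hnil K hK
end

section
/- Let f : Y₁ → Y₂ be a metric submersion between proper geodesic spaces, γ : [0,1] → Y₂ a Lipschitz curve, and q₀ ∈ f⁻¹(γ(0)). Then there is a curve γ̃ : [0,1] → Y₁ with f ∘ γ̃ = γ, γ̃(0) = q₀, and length(γ̃) = length(γ). -/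
open Metric Set

/-- `f` is a metric submersion if images of closed balls are closed balls. -/
def IsMetricSubmersion {Y₁ Y₂ : Type*} [MetricSpace Y₁] [MetricSpace Y₂] (f : Y₁ → Y₂) : Prop :=
  ∀ (y : Y₁) (r : ℝ), 0 < r → f '' closedBall y r = closedBall (f y) r

/-!
Successively lifting the points `γ (k / N)`, each step exactly as long as its image (images of balls
are balls), gives a step curve in `Y₁` over `γ` up to `K / N`, whose displacement between times
`s ≤ t` is at most the variation of `γ` on `[s, t]` up to `K / N`. Properness of `Y₁` yields a
pointwise limit of these step curves along an ultrafilter: an exact lift whose displacements are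
bounded by the variation of `γ`, hence no longer than `γ`. It is not shorter either, as `f` is
`1`-Lipschitz.
-/

open Filter Topology
open scoped ENNReal NNReal

namespace IsMetricSubmersion

variable {Y₁ Y₂ : Type*} [MetricSpace Y₁] [MetricSpace Y₂] {f : Y₁ → Y₂}

theorem dist_le (hf : IsMetricSubmersion f) (a b : Y₁) : dist (f a) (f b) ≤ dist a b := by
  rcases eq_or_ne a b with rfl | hab
  · simp
  · have hb : f b ∈ f '' closedBall a (dist a b) := mem_image_of_mem f (mem_closedBall'.2 le_rfl)
    rw [hf a _ (dist_pos.2 hab)] at hb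
    exact mem_closedBall'.1 hb

theorem lipschitzWith_one (hf : IsMetricSubmersion f) : LipschitzWith 1 f :=
  LipschitzWith.of_dist_le_mul fun a b => by simpa using hf.dist_le a b

theorem exists_preimage_dist_eq (hf : IsMetricSubmersion f) (y : Y₁) (p : Y₂) :
    ∃ y', f y' = p ∧ dist y y' = dist (f y) p := by
  rcases eq_or_ne (f y) p with rfl | hp
  · exact ⟨y, rfl, by simp⟩
  · have hmem : p ∈ closedBall (f y) (dist (f y) p) := mem_closedBall'.2 le_rfl
    rw [← hf y _ (dist_pos.2 hp)] at hmem
    obtain ⟨y', hy', rfl⟩ := hmem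
    exact ⟨y', rfl, le_antisymm (mem_closedBall'.1 hy') (hf.dist_le y y')⟩

theorem exists_seq_lift (hf : IsMetricSubmersion f) (p : ℕ → Y₂) {y : Y₁} (hy : f y = p 0) :
    ∃ q : ℕ → Y₁, q 0 = y ∧ (∀ k, f (q k) = p k) ∧
      ∀ k, edist (q k) (q (k + 1)) = edist (p k) (p (k + 1)) := by
  choose lift hlift_f hlift_dist using hf.exists_preimage_dist_eq
  let q : ℕ → Y₁ := fun k => Nat.rec y (fun k qk => lift qk (p (k + 1))) k
  have hq : ∀ k, f (q k) = p k := by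
    rintro (_ | k)
    · exact hy
    · exact hlift_f _ _
  refine ⟨q, rfl, hq, fun k => ?_⟩
  rw [edist_dist, edist_dist, ← hq k]
  exact congrArg ENNReal.ofReal (hlift_dist (q k) (p (k + 1)))

end IsMetricSubmersion

theorem eVariationOn_le_of_edist_le {α E F : Type*} [LinearOrder α] [PseudoEMetricSpace E]
    [PseudoEMetricSpace F] {g : α → E} {γ : α → F} {s : Set α}
    (h : ∀ a ∈ s, ∀ b ∈ s, a ≤ b → edist (g a) (g b) ≤ eVariationOn γ (s ∩ Icc a b)) :
    eVariationOn g s ≤ eVariationOn γ s := by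
  refine iSup_le fun ⟨n, u, hu, us⟩ => ?_
  have hsum : ∀ m, ∑ i ∈ Finset.range m, edist (g (u (i + 1))) (g (u i)) ≤
      eVariationOn γ (s ∩ Icc (u 0) (u m)) := by
    intro m
    induction m with
    | zero => simp
    | succ m ih =>
      rw [Finset.sum_range_succ, edist_comm,
        ← eVariationOn.Icc_add_Icc γ (hu m.zero_le) (hu m.le_succ) (us m)]
      exact add_le_add ih (h _ (us m) _ (us (m + 1)) (hu m.le_succ))
  exact (hsum n).trans (eVariationOn.mono γ inter_subset_left)

theorem LipschitzOnWith.eVariationOn_Icc_le {E : Type*} [PseudoEMetricSpace E] {γ : ℝ → E}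
    {K : ℝ≥0} {s : Set ℝ} (hγ : LipschitzOnWith K γ s) {a b : ℝ} (hs : Icc a b ⊆ s) :
    eVariationOn γ (Icc a b) ≤ ENNReal.ofReal (K * (b - a)) :=
  calc eVariationOn (γ ∘ id) (Icc a b) ≤ K * eVariationOn id (Icc a b) :=
        (hγ.mono hs).comp_eVariationOn_le (mapsTo_id _)
    _ = ENNReal.ofReal (K * (b - a)) := by
        rw [eVariationOn_id_Icc, ENNReal.ofReal_mul K.coe_nonneg, ENNReal.ofReal_coe_nnreal]

theorem floor_mul_div_mem_Icc {t : ℝ} (ht : 0 ≤ t) {N : ℕ} (hN : 0 < N) :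
    (⌊t * N⌋₊ : ℝ) / N ∈ Icc (t - 1 / N) t := by
  have hN' : (0 : ℝ) < N := Nat.cast_pos.2 hN
  constructor
  · rw [sub_le_iff_le_add, ← add_div, le_div_iff₀ hN']
    exact (Nat.lt_floor_add_one _).le
  · rw [div_le_iff₀ hN']
    exact Nat.floor_le (by positivity)

theorem exists_forall_tendsto_of_eventually_mem_compact {ι α X : Type*} [TopologicalSpace X]
    (U : Ultrafilter ι) {A : Set α} {S : Set X} (hS : IsCompact S) {G : ι → α → X}
    (hG : ∀ a ∈ A, ∀ᶠ i in U, G i a ∈ S) :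
    ∃ g : α → X, ∀ a ∈ A, Tendsto (fun i => G i a) U (𝓝 (g a)) := by
  refine ⟨fun a => (U.map (G · a)).lim, fun a ha => ?_⟩
  obtain ⟨x, -, hx⟩ := hS.ultrafilter_le_nhds (U.map (G · a)) (le_principal_iff.2 (hG a ha))
  exact le_nhds_lim ⟨x, hx⟩

section Lifting

variable {Y₁ Y₂ : Type*} [MetricSpace Y₁] [MetricSpace Y₂] {f : Y₁ → Y₂}

def IsApproxLift (f : Y₁ → Y₂) (γ : ℝ → Y₂) (ε : ℝ) (G : ℝ → Y₁) : Prop :=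
  (∀ t ∈ Icc (0 : ℝ) 1, dist (f (G t)) (γ t) ≤ ε) ∧
    ∀ s ∈ Icc (0 : ℝ) 1, ∀ t ∈ Icc (0 : ℝ) 1, s ≤ t →
      edist (G s) (G t) ≤ eVariationOn γ (Icc s t) + ENNReal.ofReal ε

theorem IsMetricSubmersion.exists_isApproxLift (hf : IsMetricSubmersion f) {γ : ℝ → Y₂}
    {K : ℝ≥0} (hγ : LipschitzOnWith K γ (Icc 0 1)) {q₀ : Y₁} (hq₀ : f q₀ = γ 0) {N : ℕ}
    (hN : 0 < N) : ∃ G : ℝ → Y₁, G 0 = q₀ ∧ IsApproxLift f γ (K / N) G := by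
  obtain ⟨q, hq0, hfq, hdq⟩ :=
    hf.exists_seq_lift (fun k => γ (k / N)) (y := q₀) (by simpa using hq₀)
  have hround := fun t (ht : t ∈ Icc (0 : ℝ) 1) => floor_mul_div_mem_Icc ht.1 hN
  refine ⟨fun t => q ⌊t * N⌋₊, by simpa using hq0, fun t ht => ?_, fun s hs t ht hst => ?_⟩
  · obtain ⟨h1, h2⟩ := hround t ht
    rw [hfq]
    calc dist (γ (⌊t * N⌋₊ / N)) (γ t) ≤ K * dist ((⌊t * N⌋₊ : ℝ) / N) t :=
          hγ.dist_le_mul _ ⟨by positivity, h2.trans ht.2⟩ _ ht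
      _ ≤ K * (1 / N) := by
          gcongr
          rw [Real.dist_eq, abs_sub_comm, abs_of_nonneg (by linarith)]
          linarith
      _ = K / N := mul_one_div _ _
  · set i := ⌊s * N⌋₊
    set j := ⌊t * N⌋₊
    have hij : i ≤ j := Nat.floor_mono (by gcongr)
    obtain ⟨hi1, hi2⟩ := hround s hs
    obtain ⟨-, hj2⟩ := hround t ht
    have hlip : eVariationOn γ (Icc ((i : ℝ) / N) s) ≤ ENNReal.ofReal (K / N) := by
      refine (hγ.eVariationOn_Icc_le (Icc_subset_Icc (by positivity) hs.2)).trans ?_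
      rw [div_eq_mul_one_div (K : ℝ) N]
      gcongr
      linarith
    calc edist (q i) (q j) ≤ ∑ k ∈ Finset.Ico i j, edist (q k) (q (k + 1)) :=
          edist_le_Ico_sum_edist q hij
      _ = ∑ k ∈ Finset.Ico i j, edist (γ (((k + 1 : ℕ) : ℝ) / N)) (γ ((k : ℝ) / N)) :=
          Finset.sum_congr rfl fun k _ => by rw [hdq, edist_comm]
      _ ≤ eVariationOn γ (Icc ((i : ℝ) / N) t) :=
          eVariationOn.sum_le_of_monotoneOn_Icc (u := fun k : ℕ => (k : ℝ) / N)
            (fun a _ b _ hab => div_le_div_of_nonneg_right (Nat.cast_le.2 hab) N.cast_nonneg)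
            (fun k hk => ⟨div_le_div_of_nonneg_right (Nat.cast_le.2 hk.1) N.cast_nonneg,
              (div_le_div_of_nonneg_right (Nat.cast_le.2 hk.2) N.cast_nonneg).trans hj2⟩)
      _ = eVariationOn γ (Icc ((i : ℝ) / N) s) + eVariationOn γ (Icc s t) := by
          simpa using (eVariationOn.Icc_add_Icc γ (s := univ) hi2 hst (mem_univ s)).symm
      _ ≤ eVariationOn γ (Icc s t) + ENNReal.ofReal (K / N) := by
          rw [add_comm]
          gcongr

theorem exists_lift_of_isApproxLift [ProperSpace Y₁] (hf : Continuous f) {γ : ℝ → Y₂}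
    (hγ : BoundedVariationOn γ (Icc 0 1)) {G : ℕ → ℝ → Y₁} {ε : ℕ → ℝ}
    (hε : Tendsto ε atTop (𝓝 0)) {q₀ : Y₁} (hG0 : ∀ n, G n 0 = q₀)
    (hG : ∀ n, IsApproxLift f γ (ε n) (G n)) :
    ∃ γ' : ℝ → Y₁, γ' 0 = q₀ ∧ (∀ t ∈ Icc (0 : ℝ) 1, f (γ' t) = γ t) ∧
      ∀ s ∈ Icc (0 : ℝ) 1, ∀ t ∈ Icc (0 : ℝ) 1, s ≤ t →
        edist (γ' s) (γ' t) ≤ eVariationOn γ (Icc s t) := by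
  let U : Ultrafilter ℕ := Ultrafilter.of atTop
  have hU : (U : Filter ℕ) ≤ atTop := Ultrafilter.of_le _
  have h0 : (0 : ℝ) ∈ Icc (0 : ℝ) 1 := left_mem_Icc.2 zero_le_one
  have hbound : ∀ t ∈ Icc (0 : ℝ) 1, ∀ᶠ n in U,
      G n t ∈ closedBall q₀ ((eVariationOn γ (Icc 0 1)).toReal + 1) := by
    intro t ht
    filter_upwards [hU (hε.eventually_le_const one_pos)] with n hn
    rw [mem_closedBall', ← edist_le_ofReal (by positivity), ← hG0 n,
      ENNReal.ofReal_add ENNReal.toReal_nonneg zero_le_one, ENNReal.ofReal_toReal hγ]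
    calc edist (G n 0) (G n t) ≤ eVariationOn γ (Icc 0 t) + ENNReal.ofReal (ε n) :=
          (hG n).2 0 h0 t ht ht.1
      _ ≤ eVariationOn γ (Icc 0 1) + ENNReal.ofReal 1 := by
          gcongr
          exact eVariationOn.mono γ (Icc_subset_Icc_right ht.2)
  obtain ⟨γ', hγ'⟩ :=
    exists_forall_tendsto_of_eventually_mem_compact U (isCompact_closedBall _ _) hbound
  refine ⟨γ', ?_, fun t ht => ?_, fun s hs t ht hst => ?_⟩
  · exact tendsto_nhds_unique (hγ' 0 h0) (by simp only [hG0]; exact tendsto_const_nhds)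
  · have hdist : Tendsto (fun n => dist (f (G n t)) (γ t)) atTop (𝓝 0) :=
      squeeze_zero (fun _ => dist_nonneg) (fun n => (hG n).1 t ht) hε
    exact tendsto_nhds_unique ((hf.tendsto _).comp (hγ' t ht))
      ((tendsto_iff_dist_tendsto_zero.2 hdist).mono_left hU)
  · have hlim : Tendsto (fun n => eVariationOn γ (Icc s t) + ENNReal.ofReal (ε n)) U
        (𝓝 (eVariationOn γ (Icc s t))) := by
      simpa using (tendsto_const_nhds.add (ENNReal.tendsto_ofReal hε)).mono_left hU
    exact le_of_tendsto_of_tendsto' ((hγ' s hs).edist (hγ' t ht)) hlim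
      fun n => (hG n).2 s hs t ht hst

end Lifting

theorem metric_submersion_curve_lifting_general
    (Y₁ Y₂ : Type*) [MetricSpace Y₁] [MetricSpace Y₂]
    [ProperSpace Y₁]
    (f : Y₁ → Y₂) (hf : IsMetricSubmersion f)
    (γ : ℝ → Y₂) (K : NNReal) (hγ : LipschitzOnWith K γ (Icc (0:ℝ) 1))
    (q₀ : Y₁) (hq₀ : f q₀ = γ 0) :
    ∃ γ' : ℝ → Y₁, γ' 0 = q₀ ∧ (∀ t ∈ Icc (0:ℝ) 1, f (γ' t) = γ t) ∧
      eVariationOn γ' (Icc (0:ℝ) 1) = eVariationOn γ (Icc (0:ℝ) 1) := by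
  choose G hG0 hG using fun n : ℕ => hf.exists_isApproxLift hγ hq₀ n.succ_pos
  have hε : Tendsto (fun n : ℕ => (K : ℝ) / (n + 1 : ℕ)) atTop (𝓝 0) :=
    (tendsto_const_div_atTop_nhds_zero_nat _).comp (tendsto_add_atTop_nat 1)
  have hγ_bv : BoundedVariationOn γ (Icc 0 1) :=
    ((hγ.eVariationOn_Icc_le subset_rfl).trans_lt ENNReal.ofReal_lt_top).ne
  obtain ⟨γ', hγ'0, hγ'f, hγ'var⟩ :=
    exists_lift_of_isApproxLift hf.lipschitzWith_one.continuous hγ_bv hε hG0 hG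
  refine ⟨γ', hγ'0, hγ'f, le_antisymm ?_ ?_⟩
  · refine eVariationOn_le_of_edist_le fun s hs t ht hst => ?_
    rw [inter_eq_right.2 (Icc_subset_Icc hs.1 ht.2)]
    exact hγ'var s hs t ht hst
  · calc eVariationOn γ (Icc 0 1) = eVariationOn (f ∘ γ') (Icc 0 1) :=
          eVariationOn.eq_of_eqOn fun t ht => (hγ'f t ht).symm
      _ ≤ 1 * eVariationOn γ' (Icc 0 1) :=
          hf.lipschitzWith_one.lipschitzOnWith.comp_eVariationOn_le (mapsTo_univ _ _)
      _ = eVariationOn γ' (Icc 0 1) := one_mul _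

/-- Lipschitz curves lift through metric submersions, with the same length. -/
theorem metric_submersion_curve_lifting
    (Y₁ Y₂ : Type*) [MetricSpace Y₁] [MetricSpace Y₂]
    [ProperSpace Y₁] [ProperSpace Y₂]
    (hgeo₁ : IsGeodesicSpace Y₁) (hgeo₂ : IsGeodesicSpace Y₂)
    (f : Y₁ → Y₂) (hf : IsMetricSubmersion f)
    (γ : ℝ → Y₂) (K : NNReal) (hγ : LipschitzOnWith K γ (Icc (0:ℝ) 1))
    (q₀ : Y₁) (hq₀ : f q₀ = γ 0) :
    ∃ γ' : ℝ → Y₁, γ' 0 = q₀ ∧ (∀ t ∈ Icc (0:ℝ) 1, f (γ' t) = γ t) ∧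
      eVariationOn γ' (Icc (0:ℝ) 1) = eVariationOn γ (Icc (0:ℝ) 1) :=
  metric_submersion_curve_lifting_general Y₁ Y₂ f hf γ K hγ q₀ hq₀
end

section
/- Let G, G̃ be connected Lie groups equipped with invariant geodesic metrics, and f : G̃ → G a surjective continuous homomorphism with discrete kernel that is a local isometry. Let δ > 0 be such that the ball B^G(e, δ) contains no non-trivial subgroup of G and every loop in B^G(e, δ) is null-homotopic in G. Then B^{G̃}(e, δ) contains no non-trivial subgroup of G̃ and every loop in B^{G̃}(e, δ) is null-homotopic in G̃. -/
open Metric Manifold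

/-! The kernel of `f` is discrete and `f` is open (a connected locally compact group is
σ-compact, so the open mapping theorem applies), hence `f` is a covering map. Since `f` is
isometric on balls of a fixed radius and `G̃` is geodesic, `f` is 1-Lipschitz and maps
`B^{G̃}(e,δ)` into `B^G(e,δ)`. So a path in the upper ball whose endpoints have the same image
maps to a loop in the lower ball; that loop is null-homotopic, and by homotopy lifting so is the
path, rel endpoints. This settles loops. For an element `h` of a subgroup in the upper ball,
`f h = e` because the image subgroup is trivial, and lifting applied to a geodesic from `e` to
`h` gives `h = e`. -/

open Set unitInterval Pointwise

theorem IsTopologicalGroup.sigmaCompactSpace_of_connectedSpace (G : Type*) [Group G]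
    [TopologicalSpace G] [IsTopologicalGroup G] [WeaklyLocallyCompactSpace G]
    [ConnectedSpace G] : SigmaCompactSpace G := by
  obtain ⟨K, hK, hK1⟩ := exists_compact_mem_nhds (1 : G)
  set S := K ∪ K⁻¹
  have hS_inv : S⁻¹ = S := by simp only [S, union_inv, inv_inv, union_comm]
  have hS_pow : ∀ n : ℕ, IsCompact (S ^ n) := by
    intro n
    induction n with
    | zero => simp
    | succ n ih => rw [pow_succ]; exact ih.mul (hK.union hK.inv)
  have hopen : IsOpen (Subgroup.closure S : Set G) :=
    Subgroup.isOpen_of_mem_nhds _ (Filter.mem_of_superset hK1 fun g hg ↦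
      Subgroup.subset_closure (Or.inl hg))
  have hclosure : (Subgroup.closure S : Set G) = univ :=
    IsClopen.eq_univ ⟨Subgroup.isClosed_of_isOpen _ hopen, hopen⟩ ⟨1, one_mem _⟩
  refine ⟨⟨fun n ↦ S ^ n, hS_pow, iUnion_eq_univ_iff.mpr fun g ↦ ?_⟩⟩
  have hg : g ∈ Subgroup.closure S := by rw [← SetLike.mem_coe, hclosure]; trivial
  induction hg using Subgroup.closure_induction with
  | mem x hx => exact ⟨1, by rwa [pow_one]⟩
  | one => exact ⟨0, by simp⟩
  | mul x y _ _ hx hy =>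
    obtain ⟨m, hm⟩ := hx
    obtain ⟨n, hn⟩ := hy
    exact ⟨m + n, by rw [pow_add]; exact mul_mem_mul hm hn⟩
  | inv x _ hx =>
    obtain ⟨n, hn⟩ := hx
    exact ⟨n, by rw [← hS_inv, inv_pow]; exact inv_mem_inv.mpr hn⟩

theorem MonoidHom.isCoveringMap_of_discreteTopology_ker {G H : Type*} [Group G]
    [TopologicalSpace G] [IsTopologicalGroup G] [LocallyCompactSpace G] [ConnectedSpace G]
    [Group H] [TopologicalSpace H] [IsTopologicalGroup H] [LocallyCompactSpace H] [T2Space H]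
    (f : G →* H) (hcont : Continuous f) (hsurj : Function.Surjective f)
    (hker : DiscreteTopology f.ker) : IsCoveringMap f :=
  have := IsTopologicalGroup.sigmaCompactSpace_of_connectedSpace G
  (Topology.IsQuotientMap.isQuotientCoveringMap_of_isDiscrete_ker_monoidHom
    ((f.isOpenMap_of_sigmaCompact hsurj hcont).isQuotientMap hcont hsurj)
    (isDiscrete_iff_discreteTopology.mpr hker)).isCoveringMap

section Geodesic

variable {X Y : Type*} [MetricSpace X] [MetricSpace Y]

theorem IsGeodesicSpace.exists_path_mem_closedBall (hX : IsGeodesicSpace X) (x y : X) :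
    ∃ γ : Path x y, ∀ t, γ t ∈ closedBall x (dist y x) := by
  obtain ⟨γ, hγ0, hγ1, hγ⟩ := hX x y
  set d := dist x y
  have hd : 0 ≤ d := dist_nonneg
  have hmem : ∀ t : I, d * t ∈ Icc 0 d := fun t ↦
    ⟨mul_nonneg hd t.2.1, mul_le_of_le_one_right hd t.2.2⟩
  have hdist : ∀ s t : I, dist (γ (d * s)) (γ (d * t)) = d * dist s t := fun s t ↦ by
    rw [hγ _ (hmem s) _ (hmem t), ← mul_sub, abs_mul, abs_of_nonneg hd]; rfl
  refine ⟨⟨⟨fun t ↦ γ (d * t), (LipschitzWith.of_dist_le_mul (K := ⟨d, hd⟩)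
    fun s t ↦ (hdist s t).le).continuous⟩, by simp [hγ0], by simp [hγ1]⟩, fun t ↦ ?_⟩
  have hdist0 := hdist t 0
  simp only [Set.Icc.coe_zero, mul_zero, hγ0] at hdist0
  simp only [Path.coe_mk_mk, mem_closedBall, hdist0, dist_comm y x]
  exact mul_le_of_le_one_right hd (by simpa [Subtype.dist_eq, abs_of_nonneg t.2.1] using t.2.2)

theorem IsGeodesicSpace.dist_le_of_forall_mem_ball (hX : IsGeodesicSpace X) {f : X → Y}
    {ε : ℝ} (hε : 0 < ε) (hf : ∀ x, ∀ a ∈ ball x ε, dist (f x) (f a) ≤ dist x a) (x y : X) :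
    dist (f x) (f y) ≤ dist x y := by
  obtain ⟨γ, hγ0, hγ1, hγ⟩ := hX x y
  set d := dist x y
  set r := ε / 2
  have hr : 0 < r := half_pos hε
  have hrε : r < ε := half_lt_self hε
  -- walk along the geodesic in steps of length at most `ε / 2`
  suffices key : ∀ n : ℕ, ∀ t ∈ Icc 0 d, t ≤ n * r → dist (f x) (f (γ t)) ≤ t by
    obtain ⟨n, hn⟩ := exists_nat_ge (d / r)
    simpa [hγ1] using key n d ⟨dist_nonneg, le_rfl⟩ ((div_le_iff₀ hr).mp hn)
  intro n
  induction n with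
  | zero =>
    intro t ht htn
    obtain rfl : t = 0 := le_antisymm (by simpa using htn) ht.1
    simp [hγ0]
  | succ n ih =>
    intro t ht htn
    push_cast at htn
    obtain ⟨s, hs_ge, hs_nonneg, hs_le⟩ : ∃ s, t - r ≤ s ∧ 0 ≤ s ∧ s ≤ t ∧ s ≤ n * r :=
      ⟨max 0 (t - r), le_max_right _ _, le_max_left _ _,
        max_le ht.1 (by linarith), max_le (by positivity) (by linarith)⟩
    have hs : s ∈ Icc 0 d := ⟨hs_nonneg, hs_le.1.trans ht.2⟩
    have hst : dist (γ s) (γ t) = t - s := by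
      rw [hγ _ hs _ ht, abs_sub_comm, abs_of_nonneg (by linarith)]
    have hstep : dist (f (γ s)) (f (γ t)) ≤ t - s :=
      hst ▸ hf _ _ (mem_ball'.mpr (by rw [hst]; linarith))
    calc dist (f x) (f (γ t)) ≤ dist (f x) (f (γ s)) + dist (f (γ s)) (f (γ t)) :=
          dist_triangle _ _ _
      _ ≤ s + (t - s) := add_le_add (ih s hs hs_le.2) hstep
      _ = t := by ring

end Geodesic

theorem MonoidHom.dist_map_le_of_isGeodesicSpace {G H : Type*} [Group G] [MetricSpace G]
    [Group H] [MetricSpace H] (f : G →* H) (hG : ∀ g x y : G, dist (g * x) (g * y) = dist x y)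
    (hH : ∀ g x y : H, dist (g * x) (g * y) = dist x y) (hgeo : IsGeodesicSpace G) {ε : ℝ}
    (hε : 0 < ε) (hf : ∀ a ∈ ball (1 : G) ε, dist (f a) 1 ≤ dist a 1) (x y : G) :
    dist (f x) (f y) ≤ dist x y := by
  refine hgeo.dist_le_of_forall_mem_ball hε (fun x a ha ↦ ?_) x y
  have htranslate : dist (x⁻¹ * a) 1 = dist a x := by
    simpa using (hG x (x⁻¹ * a) 1).symm
  calc dist (f x) (f a) = dist (f x * 1) (f x * f (x⁻¹ * a)) := by
        rw [mul_one, ← map_mul, mul_inv_cancel_left]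
    _ = dist (f (x⁻¹ * a)) 1 := by rw [hH, dist_comm]
    _ ≤ dist (x⁻¹ * a) 1 := hf _ (by rw [mem_ball, htranslate]; exact ha)
    _ = dist x a := by rw [htranslate, dist_comm]

theorem IsCoveringMap.homotopicRel_const_of_mapsTo {E X : Type*} [TopologicalSpace E]
    [TopologicalSpace X] {p : E → X} (cov : IsCoveringMap p) {s : Set E} {t : Set X}
    (hst : MapsTo p s t)
    (ht : ∀ (x : X) (γ : Path x x), (∀ τ, γ τ ∈ t) → γ.Homotopic (Path.refl x))
    {e₀ e₁ : E} (γ : Path e₀ e₁) (hγ : ∀ τ, γ τ ∈ s) (he : p e₀ = p e₁) :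
    γ.toContinuousMap.HomotopicRel (.const I e₀) {0, 1} :=
  (cov.homotopicRel_iff_comp ⟨0, .inl rfl, γ.source⟩).mpr
    (ht _ ((γ.map cov.continuous).cast rfl he) fun τ ↦ hst (hγ τ))

theorem final_cover_general
    {E : Type*} [NormedAddCommGroup E] [NormedSpace ℝ E] [FiniteDimensional ℝ E]
    (G : Type*) [MetricSpace G] [ChartedSpace E G] [Group G]
    [LieGroup 𝓘(ℝ, E) (⊤ : ℕ∞) G]
    (Gt : Type*) [MetricSpace Gt] [ChartedSpace E Gt] [Group Gt]
    [LieGroup 𝓘(ℝ, E) (⊤ : ℕ∞) Gt] [ConnectedSpace Gt]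
    (hinvG : ∀ g x y : G, dist (g * x) (g * y) = dist x y)
    (hinvGt : ∀ g x y : Gt, dist (g * x) (g * y) = dist x y)
    (hgeoGt : IsGeodesicSpace Gt)
    (f : Gt →* G) (hcont : Continuous f) (hsurj : Function.Surjective f)
    (hdiscrete : DiscreteTopology f.ker)
    (hlocIso : ∀ x : Gt, ∃ ε > 0, ∀ a ∈ ball x ε, ∀ b ∈ ball x ε,
      dist (f a) (f b) = dist a b)
    (δ : ℝ)
    (hnss : ∀ H : Subgroup G, (H : Set G) ⊆ closedBall (1 : G) δ → H = ⊥)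
    (hnocontent : ∀ (x : G) (γ : Path x x),
      (∀ t, γ t ∈ closedBall (1 : G) δ) → γ.Homotopic (Path.refl x)) :
    (∀ H : Subgroup Gt, (H : Set Gt) ⊆ closedBall (1 : Gt) δ → H = ⊥) ∧
      (∀ (x : Gt) (γ : Path x x),
        (∀ t, γ t ∈ closedBall (1 : Gt) δ) → γ.Homotopic (Path.refl x)) := by
  have := topologicalGroup_of_lieGroup 𝓘(ℝ, E) (⊤ : ℕ∞) (G := G)
  have := topologicalGroup_of_lieGroup 𝓘(ℝ, E) (⊤ : ℕ∞) (G := Gt)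
  have := ChartedSpace.locallyCompactSpace E G
  have := ChartedSpace.locallyCompactSpace E Gt
  have hcov := f.isCoveringMap_of_discreteTopology_ker hcont hsurj hdiscrete
  obtain ⟨ε, hε, hiso⟩ := hlocIso 1
  have hmaps : MapsTo f (closedBall 1 δ) (closedBall 1 δ) := fun g hg ↦ by
    have hlip := f.dist_map_le_of_isGeodesicSpace hinvGt hinvG hgeoGt hε
      (fun a ha ↦ by simpa using (hiso a ha 1 (mem_ball_self hε)).le) g 1
    rw [map_one] at hlip
    exact hlip.trans hg
  refine ⟨fun H hH ↦ (Subgroup.eq_bot_iff_forall H).mpr fun h hh ↦ ?_,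
    fun x γ hγ ↦ hcov.homotopicRel_const_of_mapsTo hmaps hnocontent γ hγ rfl⟩
  have hfh : f h = 1 := by
    have := hnss (H.map f) (by rintro _ ⟨g, hg, rfl⟩; exact hmaps (hH hg))
    simpa [this] using Subgroup.mem_map_of_mem f hh
  obtain ⟨γ, hγ⟩ := hgeoGt.exists_path_mem_closedBall 1 h
  obtain ⟨F⟩ := hcov.homotopicRel_const_of_mapsTo hmaps hnocontent γ
    (fun t ↦ closedBall_subset_closedBall (hH hh) (hγ t)) (by rw [map_one, hfh])
  simpa using (F.eq_fst 0 (.inr rfl)).symm.trans (F.eq_snd 0 (.inr rfl))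

/-- If `f : G̃ → G` is a surjective continuous homomorphism of connected Lie groups with
invariant geodesic metrics, with discrete kernel and a local isometry, and if the ball
`B^G(e,δ)` contains no non-trivial subgroup and every loop in it is null-homotopic in `G`,
then the same two properties hold for the ball `B^{G̃}(e,δ)`. -/
theorem final_cover
    {E : Type*} [NormedAddCommGroup E] [NormedSpace ℝ E] [FiniteDimensional ℝ E]
    (G : Type*) [MetricSpace G] [ChartedSpace E G] [Group G]
    [LieGroup 𝓘(ℝ, E) (⊤ : ℕ∞) G] [ConnectedSpace G]
    (Gt : Type*) [MetricSpace Gt] [ChartedSpace E Gt] [Group Gt]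
    [LieGroup 𝓘(ℝ, E) (⊤ : ℕ∞) Gt] [ConnectedSpace Gt]
    (hinvG : ∀ g x y : G, dist (g * x) (g * y) = dist x y)
    (hinvGt : ∀ g x y : Gt, dist (g * x) (g * y) = dist x y)
    (hgeoG : IsGeodesicSpace G) (hgeoGt : IsGeodesicSpace Gt)
    (f : Gt →* G) (hcont : Continuous f) (hsurj : Function.Surjective f)
    (hdiscrete : DiscreteTopology f.ker)
    (hlocIso : ∀ x : Gt, ∃ ε > 0, ∀ a ∈ ball x ε, ∀ b ∈ ball x ε,
      dist (f a) (f b) = dist a b)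
    (δ : ℝ) (hδ : 0 < δ)
    (hnss : ∀ H : Subgroup G, (H : Set G) ⊆ closedBall (1 : G) δ → H = ⊥)
    (hnocontent : ∀ (x : G) (γ : Path x x),
      (∀ t, γ t ∈ closedBall (1 : G) δ) → γ.Homotopic (Path.refl x)) :
    (∀ H : Subgroup Gt, (H : Set Gt) ⊆ closedBall (1 : Gt) δ → H = ⊥) ∧
      (∀ (x : Gt) (γ : Path x x),
        (∀ t, γ t ∈ closedBall (1 : Gt) δ) → γ.Homotopic (Path.refl x)) :=
  final_cover_general (E := E) G Gt hinvG hinvGt hgeoGt f hcont hsurj hdiscrete hlocIso δ hnss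
    hnocontent
end

section
/- Let Y be a proper, semi-locally-simply-connected geodesic space, y ∈ Y and r > 0. If the inclusion of the closed ball B(y,r) into Y induces a non-trivial map on fundamental groups, then there is a loop based at y of length at most 3r that is non-contractible in Y. -/
open Metric

/-- `Y` is semi-locally-simply-connected: every point has a neighborhood all of whose
loops are null-homotopic in `Y`. -/
def SemiLocallySimplyConnected (Y : Type*) [TopologicalSpace Y] : Prop :=
  ∀ z : Y, ∃ U ∈ nhds z, ∀ (w : Y) (q : Path w w),
    (∀ t, q t ∈ U) → q.Homotopic (Path.refl w)

/-- The length of a loop, as the total variation of the underlying map. -/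
noncomputable def loopLength {Y : Type*} [MetricSpace Y] {y : Y} (p : Path y y) : ENNReal :=
  eVariationOn (fun t : unitInterval => p t) Set.univ

/-!
Suppose every loop at `y` of length at most `3r` is null-homotopic, and let `γ` be a loop in
`B(y, r)`. Fix geodesics `g x` from `y` to each point `x`. A Lebesgue number for the cover of the
compact set `γ(I)` by simply connected neighbourhoods gives `ε ≤ r` such that every path of
diameter `≤ ε` in `γ(I)` from `a` to `b` is homotopic to the geodesic `[a, b]`; the geodesic
triangle `g a ⬝ [a, b] ⬝ (g b)⁻¹` has length `≤ 3r`, so it is null-homotopic. Hence every such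
short path is homotopic to `(g a)⁻¹ ⬝ g b`. These classes telescope, so cutting `γ` into dyadic
pieces of diameter `≤ ε` shows `γ ≃ (g y)⁻¹ ⬝ g y`, which is trivial.
-/

open Set unitInterval

theorem unitInterval.dist_le_one (s t : I) : dist s t ≤ 1 := by
  rw [Subtype.dist_eq, Real.dist_eq, abs_le]
  constructor <;> linarith [s.2.1, s.2.2, t.2.1, t.2.2]

theorem unitInterval.eVariationOn_id : eVariationOn (id : I → I) univ = 1 := by
  have hmono : MonotoneOn (fun t : I => (t : ℝ)) univ := fun _ _ _ _ h => h
  have h := hmono.eVariationOn_eq (a := 0) (b := 1) trivial trivial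
  have hIcc : Icc (0 : I) 1 = univ := eq_univ_of_forall fun t => ⟨t.2.1, t.2.2⟩
  rw [univ_inter, hIcc, Icc.coe_one, Icc.coe_zero, sub_zero, ENNReal.ofReal_one] at h
  exact h

namespace Path

section Length

variable {Y : Type*} [PseudoMetricSpace Y] {a b c : Y}

noncomputable def length (p : Path a b) : ENNReal :=
  eVariationOn (fun t : I => p t) univ

theorem length_le_of_lipschitzWith {K : NNReal} {p : Path a b} (hp : LipschitzWith K p) :
    p.length ≤ K :=
  calc p.length = eVariationOn (p ∘ id) univ := rfl
    _ ≤ K * eVariationOn (id : I → I) univ :=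
      hp.lipschitzOnWith.comp_eVariationOn_le (mapsTo_univ _ _)
    _ = K := by rw [unitInterval.eVariationOn_id, mul_one]

theorem length_symm (p : Path a b) : p.symm.length = p.length := by
  have := eVariationOn.comp_eq_of_antitoneOn (fun t : I => p t) σ
    (fun _ _ _ _ h => symm_le_symm.2 h) (t := univ)
  rwa [image_univ, unitInterval.symm_bijective.surjective.range_eq] at this

theorem length_trans_le (p : Path a b) (q : Path b c) :
    (p.trans q).length ≤ p.length + q.length := by
  let half : I := ⟨1 / 2, by norm_num, by norm_num⟩
  let φ : I → I := fun t => projIcc 0 1 zero_le_one (2 * t)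
  let ψ : I → I := fun t => projIcc 0 1 zero_le_one (2 * t - 1)
  have hφ : Monotone φ := fun s t h => monotone_projIcc _ (by gcongr)
  have hψ : Monotone ψ := fun s t h => monotone_projIcc _ (by gcongr)
  have h₁ : EqOn (fun t => p.trans q t) (fun t => p (φ t)) (univ ∩ Icc 0 half) := by
    rintro t ⟨-, -, ht⟩
    simp only [← extend_extends' (p.trans q), extend_trans_of_le_half _ _ ht]
    rfl
  have h₂ : EqOn (fun t => p.trans q t) (fun t => q (ψ t)) (univ ∩ Icc half 1) := by
    rintro t ⟨-, ht, -⟩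
    simp only [← extend_extends' (p.trans q), extend_trans_of_half_le _ _ ht]
    rfl
  have hIcc : univ ∩ Icc (0 : I) 1 = univ := eq_univ_of_forall fun t => ⟨trivial, t.2.1, t.2.2⟩
  calc (p.trans q).length
      = eVariationOn (fun t => p.trans q t) (univ ∩ Icc 0 half)
        + eVariationOn (fun t => p.trans q t) (univ ∩ Icc half 1) := by
        rw [eVariationOn.Icc_add_Icc _ (show 0 ≤ half from half.2.1) (show half ≤ 1 from half.2.2)
          (mem_univ half), hIcc]
        rfl
    _ ≤ p.length + q.length := by
      rw [eVariationOn.eq_of_eqOn h₁, eVariationOn.eq_of_eqOn h₂]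
      exact add_le_add
        (eVariationOn.comp_le_of_monotoneOn _ φ (hφ.monotoneOn _) (mapsTo_univ _ _))
        (eVariationOn.comp_le_of_monotoneOn _ ψ (hψ.monotoneOn _) (mapsTo_univ _ _))

theorem range_subset_closedBall_of_lipschitzWith {K : NNReal} {p : Path a b}
    (hp : LipschitzWith K p) : range p ⊆ closedBall a K :=
  range_subset_iff.2 fun t => by
    rw [mem_closedBall, dist_comm]
    calc dist a (p t) = dist (p 0) (p t) := by rw [p.source]
      _ ≤ K * dist (0 : I) t := hp.dist_le_mul 0 t
      _ ≤ K := mul_le_of_le_one_right K.2 (dist_le_one 0 t)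

end Length

section Halves

variable {X : Type*} [TopologicalSpace X] {a b : X}

noncomputable def firstHalf (p : Path a b) : Path a (p ⟨1 / 2, by norm_num, by norm_num⟩) where
  toFun t := p ⟨t / 2, by linarith [t.2.1], by linarith [t.2.2]⟩
  continuous_toFun := by fun_prop
  source' := by simp
  target' := by simp only [Icc.coe_one]

noncomputable def secondHalf (p : Path a b) : Path (p ⟨1 / 2, by norm_num, by norm_num⟩) b where
  toFun t := p ⟨(t + 1) / 2, by linarith [t.2.1], by linarith [t.2.2]⟩
  continuous_toFun := by fun_prop
  source' := by simp only [Icc.coe_zero, zero_add]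
  target' := by norm_num

theorem range_firstHalf_subset (p : Path a b) : range p.firstHalf ⊆ range p :=
  range_subset_iff.2 fun _ => mem_range_self (f := p) _

theorem range_secondHalf_subset (p : Path a b) : range p.secondHalf ⊆ range p :=
  range_subset_iff.2 fun _ => mem_range_self (f := p) _

theorem firstHalf_trans_secondHalf (p : Path a b) : p.firstHalf.trans p.secondHalf = p := by
  ext t
  rw [trans_apply]
  split_ifs <;> simp [firstHalf, secondHalf]

end Halves

end Path

namespace Path.Homotopic.Quotient

variable {X : Type*} [TopologicalSpace X] {a b c : X}

theorem eq_of_trans_symm_eq_refl {γ δ : Path.Homotopic.Quotient a b}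
    (h : γ.trans δ.symm = refl a) : γ = δ :=
  calc γ = (γ.trans δ.symm).trans δ := by rw [trans_assoc, symm_trans, trans_refl]
    _ = δ := by rw [h, refl_trans]

theorem eq_symm_trans_of_trans_eq {γ : Path.Homotopic.Quotient a b}
    {δ : Path.Homotopic.Quotient b c} {ρ : Path.Homotopic.Quotient a c}
    (h : γ.trans δ = ρ) : δ = γ.symm.trans ρ := by
  rw [← h, ← trans_assoc, symm_trans, refl_trans]

theorem mk_eq_of_range_subset {U : Set X}
    (hU : ∀ q : Path a a, range q ⊆ U → q.Homotopic (Path.refl a)) {p q : Path a b}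
    (hp : range p ⊆ U) (hq : range q ⊆ U) : mk p = mk q := by
  refine eq_of_trans_symm_eq_refl (eq.2 (hU _ ?_))
  rw [Path.trans_range, Path.symm_range]
  exact union_subset hp hq

noncomputable def coneClass (g : ∀ a b : X, Path a b) (y a b : X) :
    Path.Homotopic.Quotient a b :=
  (mk (g y a)).symm.trans (mk (g y b))

theorem coneClass_trans (g : ∀ a b : X, Path a b) (y a m b : X) :
    (coneClass g y a m).trans (coneClass g y m b) = coneClass g y a b := by
  rw [coneClass, coneClass, trans_assoc, ← trans_assoc (mk (g y m)), trans_symm, refl_trans,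
    coneClass]

theorem mk_eq_of_forall_small {Y : Type*} [PseudoMetricSpace Y] {K : Set Y}
    {c : ∀ a b : Y, Path.Homotopic.Quotient a b}
    (hc : ∀ a m b, (c a m).trans (c m b) = c a b) {ε : ℝ} (hε : 0 < ε)
    (hsmall : ∀ (a b : Y) (p : Path a b), range p ⊆ K → (∀ s t, dist (p s) (p t) ≤ ε) →
      mk p = c a b)
    {a b : Y} (p : Path a b) (hp : range p ⊆ K) : mk p = c a b := by
  have hdyadic : ∀ (n : ℕ) (a b : Y) (p : Path a b), range p ⊆ K →
      (∀ s t, dist s t ≤ (2⁻¹ : ℝ) ^ n → dist (p s) (p t) ≤ ε) → mk p = c a b := by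
    intro n
    induction n with
    | zero =>
      intro a b p hpK hp
      exact hsmall a b p hpK fun s t => hp s t (by simpa using dist_le_one s t)
    | succ n ih =>
      intro a b p hpK hp
      have hscale : ∀ x y : ℝ, |x / 2 - y / 2| = |x - y| / 2 := fun x y => by
        rw [← sub_div, abs_div, abs_two]
      have h₁ : ∀ s t : I, dist s t ≤ (2⁻¹ : ℝ) ^ n →
          dist (p.firstHalf s) (p.firstHalf t) ≤ ε := fun s t hst => hp _ _ <| by
        simp only [Subtype.dist_eq, Real.dist_eq] at hst ⊢
        rw [hscale, pow_succ]
        linarith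
      have h₂ : ∀ s t : I, dist s t ≤ (2⁻¹ : ℝ) ^ n →
          dist (p.secondHalf s) (p.secondHalf t) ≤ ε := fun s t hst => hp _ _ <| by
        simp only [Subtype.dist_eq, Real.dist_eq] at hst ⊢
        rw [hscale, add_sub_add_right_eq_sub, pow_succ]
        linarith
      rw [← p.firstHalf_trans_secondHalf, mk_trans,
        ih _ _ _ (p.range_firstHalf_subset.trans hpK) h₁,
        ih _ _ _ (p.range_secondHalf_subset.trans hpK) h₂, hc]
  obtain ⟨δ, hδ, hpδ⟩ := Metric.uniformContinuous_iff.1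
    (CompactSpace.uniformContinuous_of_continuous p.continuous) ε hε
  obtain ⟨n, hn⟩ := exists_pow_lt_of_lt_one hδ (by norm_num : (2⁻¹ : ℝ) < 1)
  exact hdyadic n a b p hp fun s t hst => (hpδ (hst.trans_lt hn)).le

end Path.Homotopic.Quotient

theorem SemiLocallySimplyConnected.exists_pos_homotopic_refl {Y : Type*} [MetricSpace Y]
    (hY : SemiLocallySimplyConnected Y) {K : Set Y} (hK : IsCompact K) :
    ∃ δ > 0, ∀ a ∈ K, ∀ q : Path a a, range q ⊆ ball a δ → q.Homotopic (Path.refl a) := by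
  choose U hU hUloop using hY
  obtain ⟨δ, hδ, hball⟩ := lebesgue_number_lemma_of_metric hK (c := fun z => interior (U z))
    (fun _ => isOpen_interior)
    (fun x _ => mem_iUnion.2 ⟨x, mem_interior_iff_mem_nhds.2 (hU x)⟩)
  refine ⟨δ, hδ, fun a ha q hq => ?_⟩
  obtain ⟨z, hz⟩ := hball a ha
  exact hUloop z a q fun t => interior_subset (hz (hq ⟨t, rfl⟩))

namespace IsGeodesicSpace

open Path.Homotopic.Quotient

variable {Y : Type*} [MetricSpace Y]

theorem exists_path_lipschitzWith (hY : IsGeodesicSpace Y) (a b : Y) :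
    ∃ p : Path a b, LipschitzWith (nndist a b) p := by
  obtain ⟨γ, hγa, hγb, hγ⟩ := hY a b
  have hmem : ∀ t : I, dist a b * t ∈ Icc 0 (dist a b) := fun t =>
    ⟨mul_nonneg dist_nonneg t.2.1, mul_le_of_le_one_right dist_nonneg t.2.2⟩
  have hlip : LipschitzWith (nndist a b) fun t : I => γ (dist a b * t) :=
    LipschitzWith.of_dist_le_mul fun s t => by
      rw [hγ _ (hmem s) _ (hmem t), ← mul_sub, abs_mul, abs_of_nonneg dist_nonneg]
      rfl
  exact ⟨⟨⟨fun t => γ (dist a b * t), hlip.continuous⟩, by simp [hγa], by simp [hγb]⟩, hlip⟩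

theorem mk_eq_coneClass_of_dist_le {g : ∀ a b : Y, Path a b}
    (hg : ∀ a b, LipschitzWith (nndist a b) (g a b)) {y : Y} {r : ℝ} (hr : 0 ≤ r)
    (hshort : ∀ β : Path y y, loopLength β ≤ ENNReal.ofReal (3 * r) → β.Homotopic (Path.refl y))
    {a b : Y} (hya : dist y a ≤ r) (hab : dist a b ≤ r) (hyb : dist y b ≤ r) :
    mk (g a b) = coneClass g y a b := by
  have hg_length : ∀ a b, (g a b).length ≤ ENNReal.ofReal (dist a b) := fun a b =>
    (Path.length_le_of_lipschitzWith (hg a b)).trans_eq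
      ((edist_nndist a b).symm.trans (edist_dist a b))
  refine eq_symm_trans_of_trans_eq (eq_of_trans_symm_eq_refl ?_)
  rw [trans_assoc]
  refine eq.2 (hshort _ ?_)
  calc ((g y a).trans ((g a b).trans (g y b).symm)).length
      ≤ (g y a).length + ((g a b).length + (g y b).length) := by
        grw [Path.length_trans_le, Path.length_trans_le, Path.length_symm]
    _ ≤ ENNReal.ofReal r + (ENNReal.ofReal r + ENNReal.ofReal r) := by
        grw [hg_length, hg_length, hg_length, hya, hyb, hab]
    _ = ENNReal.ofReal (3 * r) := by
        rw [← ENNReal.ofReal_add hr hr, ← ENNReal.ofReal_add hr (by positivity)]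
        ring_nf

theorem homotopic_refl_of_forall_loopLength_le (hgeo : IsGeodesicSpace Y)
    (hslsc : SemiLocallySimplyConnected Y) {y : Y} {r : ℝ} (hr : 0 < r)
    (hshort : ∀ β : Path y y, loopLength β ≤ ENNReal.ofReal (3 * r) → β.Homotopic (Path.refl y))
    {γ : Path y y} (hγ : ∀ t, γ t ∈ closedBall y r) : γ.Homotopic (Path.refl y) := by
  choose g hg using hgeo.exists_path_lipschitzWith
  obtain ⟨δ, hδ, hloop⟩ := hslsc.exists_pos_homotopic_refl (isCompact_range γ.continuous)
  set ε := min (δ / 2) r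
  have hεδ : ε < δ := (min_le_left _ _).trans_lt (half_lt_self hδ)
  have hεr : ε ≤ r := min_le_right _ _
  have hγr : ∀ x ∈ range γ, dist y x ≤ r := by
    rintro _ ⟨t, rfl⟩
    exact dist_comm y (γ t) ▸ hγ t
  have hsmall : ∀ (a b : Y) (p : Path a b), range p ⊆ range γ →
      (∀ s t, dist (p s) (p t) ≤ ε) → mk p = coneClass g y a b := by
    intro a b p hpγ hp
    have hab : dist a b ≤ ε := by simpa using hp 0 1
    have hp_ball : range p ⊆ ball a δ := range_subset_iff.2 fun t => by
      rw [mem_ball, dist_comm]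
      simpa only [p.source] using (hp 0 t).trans_lt hεδ
    have hg_ball : range (g a b) ⊆ ball a δ :=
      (Path.range_subset_closedBall_of_lipschitzWith (hg a b)).trans
        (closedBall_subset_ball (hab.trans_lt hεδ))
    rw [mk_eq_of_range_subset (hloop a (hpγ ⟨0, p.source⟩)) hp_ball hg_ball]
    exact mk_eq_coneClass_of_dist_le hg hr.le hshort (hγr a (hpγ ⟨0, p.source⟩))
      (hab.trans hεr) (hγr b (hpγ ⟨1, p.target⟩))
  have hγ_cone := mk_eq_of_forall_small (coneClass_trans g y) (lt_min (half_pos hδ) hr) hsmall γ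
    subset_rfl
  rwa [coneClass, symm_trans, ← mk_refl, eq] at hγ_cone

end IsGeodesicSpace

theorem short_noncontractible_loop_general
    (Y : Type*) [MetricSpace Y] (hgeo : IsGeodesicSpace Y)
    (hslsc : SemiLocallySimplyConnected Y)
    (y : Y) (r : ℝ) (hr : 0 < r)
    (hcontent : ∃ γ : Path y y, (∀ t, γ t ∈ closedBall y r) ∧
      ¬ γ.Homotopic (Path.refl y)) :
    ∃ β : Path y y, loopLength β ≤ ENNReal.ofReal (3 * r) ∧
      ¬ β.Homotopic (Path.refl y) := by
  obtain ⟨γ, hγ, hγ_nontrivial⟩ := hcontent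
  by_contra! hshort
  exact hγ_nontrivial (hgeo.homotopic_refl_of_forall_loopLength_le hslsc hr hshort hγ)

/-- If the inclusion `B(y,r) → Y` has non-trivial content, there is a non-contractible
loop based at `y` of length at most `3r`. -/
theorem short_noncontractible_loop
    (Y : Type*) [MetricSpace Y] [ProperSpace Y] (hgeo : IsGeodesicSpace Y)
    (hslsc : SemiLocallySimplyConnected Y)
    (y : Y) (r : ℝ) (hr : 0 < r)
    (hcontent : ∃ γ : Path y y, (∀ t, γ t ∈ closedBall y r) ∧
      ¬ γ.Homotopic (Path.refl y)) :
    ∃ β : Path y y, loopLength β ≤ ENNReal.ofReal (3 * r) ∧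
      ¬ β.Homotopic (Path.refl y) :=
  short_noncontractible_loop_general Y hgeo hslsc y r hr hcontent
end
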